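/- If u1, u2, u3 solve the cyclic three-species ODE system with initial conditions 0 < ui(0) < 1 for i = 1,2,3 and u1(0)+u2(0)+u3(0) = 1, then for every t ≥ 0 and every i, the value ui(t) is strictly positive; in fact inf over s in [0,t] of ui(s) > 0. -/

import Mathlib

lemma pos_of_ne_zero_aux {f : ℝ → ℝ} {t : ℝ}
    (hc : ContinuousOn f (Set.Icc 0 t)) (h0 : 0 < f 0)
    (hne : ∀ s ∈ Set.Icc 0 t, f s ≠ 0) : ∀ s ∈ Set.Icc 0 t, 0 < f s := by
  intro s hs
  by_contra h
  push_neg at h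
  have hlt : f s < 0 := lt_of_le_of_ne h (hne s hs)
  have hsub : Set.Icc 0 s ⊆ Set.Icc 0 t := Set.Icc_subset_Icc le_rfl hs.2
  obtain ⟨c, hc', hfc⟩ := intermediate_value_Icc' hs.1 (hc.mono hsub)
    (⟨hlt.le, h0.le⟩ : (0:ℝ) ∈ Set.Icc (f s) (f 0))
  exact hne c (hsub hc') hfc

lemma sInf_pos_aux {f : ℝ → ℝ} {t : ℝ} (ht : 0 ≤ t)
    (hc : ContinuousOn f (Set.Icc 0 t))
    (hpos : ∀ s ∈ Set.Icc 0 t, 0 < f s) : 0 < sInf (f '' Set.Icc 0 t) := by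
  have hne : (f '' Set.Icc 0 t).Nonempty := ⟨f 0, 0, ⟨le_rfl, ht⟩, rfl⟩
  have hcmp : IsCompact (f '' Set.Icc 0 t) := (isCompact_Icc).image_of_continuousOn hc
  obtain ⟨c, hcm, hcf⟩ := hcmp.sInf_mem hne
  rw [← hcf]
  exact hpos c hcm

/-- For the cyclic three-species ODE system with initial conditions `0 < uᵢ(0) < 1` and
`u1(0)+u2(0)+u3(0)=1`, each `uᵢ(t)` is strictly positive for all `t ≥ 0`; in fact the
infimum of `uᵢ` over `[0, t]` is strictly positive. -/
theorem positivity_of_cyclic_system (l : ℝ) (hl : 0 < l) (u1 u2 u3 : ℝ → ℝ)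
    (h1 : ∀ t : ℝ, 0 ≤ t → HasDerivAt u1 (l * (u1 t * u2 t - u3 t * u1 t)) t)
    (h2 : ∀ t : ℝ, 0 ≤ t → HasDerivAt u2 (l * (u2 t * u3 t - u1 t * u2 t)) t)
    (h3 : ∀ t : ℝ, 0 ≤ t → HasDerivAt u3 (l * (u3 t * u1 t - u2 t * u3 t)) t)
    (hinit1 : 0 < u1 0 ∧ u1 0 < 1) (hinit2 : 0 < u2 0 ∧ u2 0 < 1)
    (hinit3 : 0 < u3 0 ∧ u3 0 < 1) (hsum : u1 0 + u2 0 + u3 0 = 1) :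
    ∀ t : ℝ, 0 ≤ t →
      (0 < u1 t ∧ 0 < u2 t ∧ 0 < u3 t) ∧
      0 < sInf (u1 '' Set.Icc 0 t) ∧ 0 < sInf (u2 '' Set.Icc 0 t) ∧
      0 < sInf (u3 '' Set.Icc 0 t) := by
  -- continuity of each uᵢ on [0,∞)
  have hc1 : ∀ t, 0 ≤ t → ContinuousWithinAt u1 (Set.Icc 0 t) t := by
    intro t ht; exact ((h1 t ht).continuousAt).continuousWithinAt
  have cont1 : ∀ t, 0 ≤ t → ContinuousOn u1 (Set.Icc 0 t) := by
    intro t ht s hs; exact ((h1 s hs.1).continuousAt).continuousWithinAt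
  have cont2 : ∀ t, 0 ≤ t → ContinuousOn u2 (Set.Icc 0 t) := by
    intro t ht s hs; exact ((h2 s hs.1).continuousAt).continuousWithinAt
  have cont3 : ∀ t, 0 ≤ t → ContinuousOn u3 (Set.Icc 0 t) := by
    intro t ht s hs; exact ((h3 s hs.1).continuousAt).continuousWithinAt
  -- the product is conserved
  have hP : ∀ t : ℝ, 0 ≤ t →
      HasDerivAt (fun s => u1 s * u2 s * u3 s) 0 t := by
    intro t ht
    have := ((h1 t ht).mul (h2 t ht)).mul (h3 t ht)
    exact this.congr_deriv (by simp only [Pi.mul_apply]; ring)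
  have hPconst : ∀ t : ℝ, 0 ≤ t →
      u1 t * u2 t * u3 t = u1 0 * u2 0 * u3 0 := by
    intro t ht
    have hcont : ContinuousOn (fun s => u1 s * u2 s * u3 s) (Set.Icc 0 t) :=
      ((cont1 t ht).mul (cont2 t ht)).mul (cont3 t ht)
    have hderiv : ∀ x ∈ Set.Ico 0 t,
        HasDerivWithinAt (fun s => u1 s * u2 s * u3 s) 0 (Set.Ici x) x := by
      intro x hx
      exact (hP x hx.1).hasDerivWithinAt
    exact constant_of_has_deriv_right_zero hcont hderiv t ⟨ht, le_rfl⟩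
  have hP0 : 0 < u1 0 * u2 0 * u3 0 :=
    mul_pos (mul_pos hinit1.1 hinit2.1) hinit3.1
  -- each uᵢ never vanishes on [0,∞)
  have hne1 : ∀ s : ℝ, 0 ≤ s → u1 s ≠ 0 := by
    intro s hs h
    have h0 : u1 0 * u2 0 * u3 0 = 0 := by
      rw [← hPconst s hs, h]; ring
    exact hP0.ne' h0
  have hne2 : ∀ s : ℝ, 0 ≤ s → u2 s ≠ 0 := by
    intro s hs h
    have h0 : u1 0 * u2 0 * u3 0 = 0 := by
      rw [← hPconst s hs, h]; ring
    exact hP0.ne' h0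
  have hne3 : ∀ s : ℝ, 0 ≤ s → u3 s ≠ 0 := by
    intro s hs h
    have h0 : u1 0 * u2 0 * u3 0 = 0 := by
      rw [← hPconst s hs, h]; ring
    exact hP0.ne' h0
  intro t ht
  have pos1 := pos_of_ne_zero_aux (cont1 t ht) hinit1.1 (fun s hs => hne1 s hs.1)
  have pos2 := pos_of_ne_zero_aux (cont2 t ht) hinit2.1 (fun s hs => hne2 s hs.1)
  have pos3 := pos_of_ne_zero_aux (cont3 t ht) hinit3.1 (fun s hs => hne3 s hs.1)
  exact ⟨⟨pos1 t ⟨ht, le_rfl⟩, pos2 t ⟨ht, le_rfl⟩, pos3 t ⟨ht, le_rfl⟩⟩,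
    sInf_pos_aux ht (cont1 t ht) pos1,
    sInf_pos_aux ht (cont2 t ht) pos2,
    sInf_pos_aux ht (cont3 t ht) pos3⟩
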